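/- arXiv:1306.3026 — 3 statements merged into one kernel-verified Lean document; each statement's English description precedes it below -/
import Mathlib

section
/- Let N, d ≥ 1 and for each proper subset I ⊊ {1,…,d} let ν_I : (ZMod N)^I → ℝ be a nonnegative function. Then f ↦ ‖f‖_{□,ν} is a well-defined seminorm on the space of functions (ZMod N)^d → ℝ: ‖f‖_{□,ν} ≥ 0 for all f, ‖λ f‖_{□,ν} = |λ| · ‖f‖_{□,ν} for all λ ∈ ℝ, and ‖f + g‖_{□,ν} ≤ ‖f‖_{□,ν} + ‖g‖_{□,ν} for all f, g. -/
/-!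
Fix a coordinate `k` and split `x = (x_k, x')`, `y = (y_k, y')`. For fixed `(x', y')` the
integrand of `⟨(f_ω)⟩_{□,ν}` factors as `W(x', y') · a(x_k) · b(y_k)`: the faces `ω_k = 0` and
`ω_k = 1` of the cube contribute separately, the weights `ν_I` with `k ∉ I` only enter `W ≥ 0`,
and those with `k ∈ I` split evenly between the two faces. Weighted Cauchy–Schwarz in `(x', y')`
then bounds `⟨(f_ω)⟩²` by the two inner products in which the family is made constant in `ω_k`
by copying either face; for a single function it shows `⟨f⟩ = 𝔼 W · (𝔼 a)² ≥ 0`. Going through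
all coordinates gives the Gowers–Cauchy–Schwarz inequality `|⟨(f_ω)⟩| ≤ ∏ ‖f_ω‖`, and expanding
`⟨f + g⟩` multilinearly into `2^(2^d)` such inner products gives
`‖f + g‖^(2^d) ≤ (‖f‖ + ‖g‖)^(2^d)`. Both the nonnegativity of `⟨f⟩` and the evenness of `2^d`,
which gives `‖λ f‖ = |λ| ‖f‖`, need `d ≥ 1`.
-/

noncomputable section
open Finset

/-- `P_ω(x,y)`: the point whose `i`-th coordinate is `x i` if `ω i = false` and `y i` otherwise. -/
def proj {ι : Type*} {N : ℕ} (ω : ι → Bool) (x y : ι → ZMod N) : ι → ZMod N :=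
  fun i => if ω i then y i else x i

/-- `P_{ω_I}(x_I, y_I)` as a function on the subtype `↥I`. -/
def projI {ι : Type*} {N : ℕ} {I : Finset ι} (ω : I → Bool) (x y : ι → ZMod N) :
    I → ZMod N :=
  fun i => if ω i then y i.1 else x i.1

/-- The product of the weights `ν_I(P_{ω_I}(x_I,y_I))` over proper subsets `I ⊊ ι`
and all `ω_I ∈ {0,1}^I`. -/
def weightProd {ι : Type*} [Fintype ι] [DecidableEq ι] {N : ℕ}
    (ν : (I : Finset ι) → (I → ZMod N) → ℝ) (x y : ι → ZMod N) : ℝ :=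
  ∏ I ∈ univ.filter (fun I : Finset ι => I ≠ univ), ∏ ω : I → Bool, ν I (projI ω x y)

/-- The weighted Gowers inner product `⟨(f_ω)⟩_{□,ν}`. -/
def gowersInner {ι : Type*} [Fintype ι] [DecidableEq ι] {N : ℕ} [NeZero N]
    (ν : (I : Finset ι) → (I → ZMod N) → ℝ)
    (f : (ι → Bool) → (ι → ZMod N) → ℝ) : ℝ :=
  Finset.expect Finset.univ fun x : ι → ZMod N =>
    Finset.expect Finset.univ fun y : ι → ZMod N =>
      (∏ ω : ι → Bool, f ω (proj ω x y)) * weightProd ν x y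

/-- The weighted box norm `‖f‖_{□,ν}`. -/
def boxNorm {ι : Type*} [Fintype ι] [DecidableEq ι] {N : ℕ} [NeZero N]
    (ν : (I : Finset ι) → (I → ZMod N) → ℝ) (f : (ι → ZMod N) → ℝ) : ℝ :=
  gowersInner ν (fun _ => f) ^ (((2 : ℝ) ^ (Fintype.card ι))⁻¹)

open Function
open scoped BigOperators

theorem Fintype.expect_expect_update {ι α β : Type*} [Fintype ι] [DecidableEq ι] [Fintype α]
    [Nonempty α] [AddCommMonoid β] [Module ℚ≥0 β] (k : ι) (h : (ι → α) → β) :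
    𝔼 x, 𝔼 s, h (update x k s) = 𝔼 x, h x := by
  have hinv : Involutive fun p : (ι → α) × α => (update p.1 k p.2, p.1 k) := fun p => by simp
  rw [← expect_product', univ_product_univ,
    Fintype.expect_bijective _ hinv.bijective _ (fun p => h p.1) fun _ => rfl,
    ← univ_product_univ, expect_product]
  simp only [Fintype.expect_const]

theorem Finset.expect_weighted_mul_sq_le_sq_mul_sq {X : Type*} (s : Finset X) (w a b : X → ℝ)
    (hw : ∀ x ∈ s, 0 ≤ w x) :
    (𝔼 x ∈ s, w x * (a x * b x)) ^ 2 ≤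
      (𝔼 x ∈ s, w x * (a x * a x)) * 𝔼 x ∈ s, w x * (b x * b x) := by
  have hsq (c : X → ℝ) (x : X) (hx : x ∈ s) : (√(w x) * c x) ^ 2 = w x * (c x * c x) := by
    rw [mul_pow, Real.sq_sqrt (hw x hx), sq]
  calc (𝔼 x ∈ s, w x * (a x * b x)) ^ 2
      = (𝔼 x ∈ s, (√(w x) * a x) * (√(w x) * b x)) ^ 2 := by
        congr 1
        exact expect_congr rfl fun x hx => by rw [mul_mul_mul_comm, Real.mul_self_sqrt (hw x hx)]
    _ ≤ (𝔼 x ∈ s, (√(w x) * a x) ^ 2) * 𝔼 x ∈ s, (√(w x) * b x) ^ 2 :=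
        expect_mul_sq_le_sq_mul_sq ..
    _ = _ := by rw [expect_congr rfl (hsq a), expect_congr rfl (hsq b)]

section Cube
variable {κ : Type*} [DecidableEq κ] {N : ℕ}

theorem proj_update_of_eq_false {ω : κ → Bool} {k : κ} (hω : ω k = false) (x y : κ → ZMod N)
    (s t : ZMod N) : proj ω (update x k s) (update y k t) = proj ω (update x k s) y := by
  ext j
  by_cases hj : j = k <;> simp_all [proj]

theorem proj_update_true {ω : κ → Bool} {k : κ} (hω : ω k = false) (x y : κ → ZMod N)
    (s t : ZMod N) :
    proj (update ω k true) (update x k s) (update y k t) = proj ω (update x k t) y := by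
  ext j
  by_cases hj : j = k <;> simp_all [proj]

variable [Fintype κ] {M : Type*} [CommMonoid M]

theorem prod_cube_eq_prod_lowerFace (k : κ) (g : (κ → Bool) → M) :
    ∏ ω, g ω = ∏ ω ∈ univ.filter (· k = false), g ω * g (update ω k true) := by
  rw [← prod_filter_mul_prod_filter_not univ (· k = false), prod_mul_distrib]
  congr 1
  refine prod_nbij' (update · k false) (update · k true) (by simp) (by simp)
    (fun ω hω => by simp_all) (fun ω hω => by simp_all) fun ω hω => ?_
  have hω : ω k = true := by simpa using (mem_filter.1 hω).2
  rw [update_idem, ← hω, update_eq_self]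

def faceProd (k : κ) (f : (κ → Bool) → (κ → ZMod N) → M) (x y : κ → ZMod N) (s : ZMod N) : M :=
  ∏ ω ∈ univ.filter (· k = false), f ω (proj ω (update x k s) y)

theorem prod_proj_update (k : κ) (f : (κ → Bool) → (κ → ZMod N) → M) (x y : κ → ZMod N)
    (s t : ZMod N) :
    ∏ ω, f ω (proj ω (update x k s) (update y k t)) =
      faceProd k f x y s * faceProd k (fun ω => f (update ω k true)) x y t := by
  rw [prod_cube_eq_prod_lowerFace k, faceProd, faceProd, ← prod_mul_distrib]
  refine prod_congr rfl fun ω hω => ?_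
  have hω : ω k = false := (mem_filter.1 hω).2
  rw [proj_update_of_eq_false hω, proj_update_true hω]

theorem faceProd_update_false (k : κ) (f : (κ → Bool) → (κ → ZMod N) → M) :
    faceProd k (fun ω => f (update ω k false)) = faceProd k f := by
  ext x y s
  refine prod_congr rfl fun ω hω => ?_
  beta_reduce
  rw [update_eq_self_iff.2 (mem_filter.1 hω).2.symm]

end Cube

section Weights
variable {ι : Type*} [Fintype ι] [DecidableEq ι] {N : ℕ}

def outerWeight (k : ι) (ν : (I : Finset ι) → (I → ZMod N) → ℝ) (x y : ι → ZMod N) : ℝ :=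
  ∏ I ∈ univ.filter (· ≠ univ), if k ∈ I then 1 else ∏ ω : I → Bool, ν I (projI ω x y)

def faceWeight (k : ι) (ν : (I : Finset ι) → (I → ZMod N) → ℝ) (x y : ι → ZMod N)
    (s : ZMod N) : ℝ :=
  ∏ I ∈ univ.filter (· ≠ univ),
    if hk : k ∈ I then faceProd ⟨k, hk⟩ (fun _ => ν I) (x ∘ (↑)) (y ∘ (↑)) s else 1

theorem outerWeight_nonneg {ν : (I : Finset ι) → (I → ZMod N) → ℝ}
    (hν : ∀ I : Finset ι, I ≠ univ → ∀ z, 0 ≤ ν I z) (k : ι) (x y : ι → ZMod N) :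
    0 ≤ outerWeight k ν x y := by
  refine prod_nonneg fun I hI => ?_
  split_ifs
  · exact zero_le_one
  · exact prod_nonneg fun ω _ => hν I (mem_filter.1 hI).2 _

theorem weightProd_update (k : ι) (ν : (I : Finset ι) → (I → ZMod N) → ℝ) (x y : ι → ZMod N)
    (s t : ZMod N) :
    weightProd ν (update x k s) (update y k t) =
      outerWeight k ν x y * (faceWeight k ν x y s * faceWeight k ν x y t) := by
  simp only [weightProd, outerWeight, faceWeight, ← prod_mul_distrib]
  refine prod_congr rfl fun I _ => ?_
  by_cases hk : k ∈ I
  · have hres (z : ι → ZMod N) (r : ZMod N) :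
        update z k r ∘ ((↑) : I → ι) = update (z ∘ (↑)) ⟨k, hk⟩ r :=
      update_comp_eq_of_injective z Subtype.val_injective ⟨k, hk⟩ r
    simp only [hk, dif_pos, if_pos, one_mul]
    change ∏ ω, ν I (proj ω (update x k s ∘ (↑)) (update y k t ∘ (↑))) = _
    rw [hres, hres, prod_proj_update]
  · have hres (z : ι → ZMod N) (r : ZMod N) : update z k r ∘ ((↑) : I → ι) = z ∘ (↑) :=
      funext fun j => by simp [ne_of_mem_of_not_mem j.2 hk]
    simp only [hk, dif_neg, if_neg, not_false_eq_true, mul_one]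
    change ∏ ω, ν I (proj ω (update x k s ∘ (↑)) (update y k t ∘ (↑))) = _
    rw [hres, hres]
    rfl

end Weights

section GowersInner
variable {ι : Type*} [Fintype ι] [DecidableEq ι] {N : ℕ} [NeZero N]

def faceAvg (k : ι) (ν : (I : Finset ι) → (I → ZMod N) → ℝ)
    (f : (ι → Bool) → (ι → ZMod N) → ℝ) (x y : ι → ZMod N) : ℝ :=
  𝔼 s, faceProd k f x y s * faceWeight k ν x y s

theorem faceAvg_update_false (k : ι) (ν : (I : Finset ι) → (I → ZMod N) → ℝ)
    (f : (ι → Bool) → (ι → ZMod N) → ℝ) :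
    faceAvg k ν (fun ω => f (update ω k false)) = faceAvg k ν f := by
  unfold faceAvg
  rw [faceProd_update_false]

theorem gowersInner_eq_expect_faceAvg (k : ι) (ν : (I : Finset ι) → (I → ZMod N) → ℝ)
    (f : (ι → Bool) → (ι → ZMod N) → ℝ) :
    gowersInner ν f = 𝔼 x, 𝔼 y, outerWeight k ν x y *
      (faceAvg k ν f x y * faceAvg k ν (fun ω => f (update ω k true)) x y) := by
  set K : (ι → ZMod N) → (ι → ZMod N) → ℝ := fun x y =>
    (∏ ω, f ω (proj ω x y)) * weightProd ν x y
  calc gowersInner ν f = 𝔼 x, 𝔼 y, K x y := rfl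
    _ = 𝔼 x, 𝔼 s, 𝔼 y, 𝔼 t, K (update x k s) (update y k t) := by
      simp only [Fintype.expect_expect_update]
      exact (Fintype.expect_expect_update k fun x => 𝔼 y, K x y).symm
    _ = 𝔼 x, 𝔼 y, 𝔼 s, 𝔼 t, K (update x k s) (update y k t) :=
      expect_congr rfl fun x _ => expect_comm _ _ _
    _ = _ := by
      refine expect_congr rfl fun x _ => expect_congr rfl fun y _ => ?_
      simp only [K, faceAvg, prod_proj_update, weightProd_update]
      rw [expect_mul_expect, mul_expect]
      refine expect_congr rfl fun s _ => ?_
      rw [mul_expect]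
      exact expect_congr rfl fun t _ => by ring

end GowersInner

section GowersCauchySchwarz
variable {ι : Type*} [Fintype ι] [DecidableEq ι] {N : ℕ} [NeZero N]
  {ν : (I : Finset ι) → (I → ZMod N) → ℝ}

theorem gowersInner_sq_le (hν : ∀ I : Finset ι, I ≠ univ → ∀ z, 0 ≤ ν I z) (k : ι)
    (f : (ι → Bool) → (ι → ZMod N) → ℝ) :
    gowersInner ν f ^ 2 ≤
      gowersInner ν (fun ω => f (update ω k false)) *
        gowersInner ν (fun ω => f (update ω k true)) := by
  rw [gowersInner_eq_expect_faceAvg k, gowersInner_eq_expect_faceAvg k,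
    gowersInner_eq_expect_faceAvg k]
  simp only [update_idem, faceAvg_update_false, ← expect_product']
  exact expect_weighted_mul_sq_le_sq_mul_sq _ _ _ _ fun p _ => outerWeight_nonneg hν k p.1 p.2

theorem gowersInner_const_nonneg [Nonempty ι] (hν : ∀ I : Finset ι, I ≠ univ → ∀ z, 0 ≤ ν I z)
    (F : (ι → ZMod N) → ℝ) : 0 ≤ gowersInner ν (fun _ => F) := by
  obtain ⟨k⟩ := ‹Nonempty ι›
  rw [gowersInner_eq_expect_faceAvg k]
  exact expect_nonneg fun x _ => expect_nonneg fun y _ =>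
    mul_nonneg (outerWeight_nonneg hν k x y) (mul_self_nonneg _)

theorem prod_gowersInner_piecewise_le_insert (hν : ∀ I : Finset ι, I ≠ univ → ∀ z, 0 ≤ ν I z)
    (f : (ι → Bool) → (ι → ZMod N) → ℝ) {S : Finset ι} {k : ι} (hk : k ∉ S) :
    ∏ τ, gowersInner ν (fun ω => f (S.piecewise τ ω)) ≤
      ∏ τ, gowersInner ν (fun ω => f ((insert k S).piecewise τ ω)) := by
  have hS (τ ω : ι → Bool) (b : Bool) : S.piecewise (update τ k b) ω = S.piecewise τ ω :=
    S.piecewise_congr (fun j hj => update_of_ne (ne_of_mem_of_not_mem hj hk) _ _) fun _ _ => rfl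
  have hins (τ ω : ι → Bool) (b : Bool) :
      (insert k S).piecewise (update τ k b) ω = S.piecewise τ (update ω k b) := by
    rw [piecewise_insert, update_self, hS, update_piecewise_of_notMem _ _ _ hk]
  rw [prod_cube_eq_prod_lowerFace k, prod_cube_eq_prod_lowerFace k]
  refine prod_le_prod (fun τ _ => ?_) fun τ hτ => ?_
  · simp only [hS]
    exact mul_self_nonneg _
  · have hτ : update τ k false = τ := update_eq_self_iff.2 (mem_filter.1 hτ).2.symm
    simp only [hS, ← sq]
    calc _ ≤ _ := gowersInner_sq_le hν k fun ω => f (S.piecewise τ ω)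
      _ = _ := by simp only [← hins, hτ]

theorem gowersInner_pow_le_prod (hν : ∀ I : Finset ι, I ≠ univ → ∀ z, 0 ≤ ν I z)
    (f : (ι → Bool) → (ι → ZMod N) → ℝ) :
    gowersInner ν f ^ 2 ^ Fintype.card ι ≤ ∏ τ, gowersInner ν (fun _ => f τ) := by
  have key (S : Finset ι) :
      gowersInner ν f ^ 2 ^ Fintype.card ι ≤
        ∏ τ, gowersInner ν (fun ω => f (S.piecewise τ ω)) := by
    induction S using Finset.induction_on with
    | empty => simp
    | insert k S hk ih => exact ih.trans (prod_gowersInner_piecewise_le_insert hν f hk)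
  simpa using key univ

end GowersCauchySchwarz

section BoxNorm
variable {ι : Type*} [Fintype ι] [DecidableEq ι] {N : ℕ} [NeZero N]
  {ν : (I : Finset ι) → (I → ZMod N) → ℝ}

theorem gowersInner_sum {κ : Type*} [Fintype κ] (ν : (I : Finset ι) → (I → ZMod N) → ℝ)
    (F : (ι → Bool) → κ → (ι → ZMod N) → ℝ) :
    gowersInner ν (fun ω => ∑ j, F ω j) =
      ∑ c : (ι → Bool) → κ, gowersInner ν (fun ω => F ω (c ω)) := by
  simp only [gowersInner, Finset.sum_apply, Fintype.prod_sum, sum_mul, expect_sum_comm]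

theorem gowersInner_mul (ν : (I : Finset ι) → (I → ZMod N) → ℝ) (c : (ι → Bool) → ℝ)
    (f : (ι → Bool) → (ι → ZMod N) → ℝ) :
    gowersInner ν (fun ω x => c ω * f ω x) = (∏ ω, c ω) * gowersInner ν f := by
  simp only [gowersInner, prod_mul_distrib, mul_expect, mul_assoc]

theorem even_two_pow_card (ι : Type*) [Fintype ι] [Nonempty ι] : Even (2 ^ Fintype.card ι) :=
  Nat.even_pow.2 ⟨even_two, Fintype.card_ne_zero⟩

variable [Nonempty ι] (hν : ∀ I : Finset ι, I ≠ univ → ∀ z, 0 ≤ ν I z)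
include hν

theorem boxNorm_nonneg (F : (ι → ZMod N) → ℝ) : 0 ≤ boxNorm ν F :=
  Real.rpow_nonneg (gowersInner_const_nonneg hν F) _

theorem boxNorm_pow_two_pow_card (F : (ι → ZMod N) → ℝ) :
    boxNorm ν F ^ 2 ^ Fintype.card ι = gowersInner ν (fun _ => F) := by
  have h : (2 : ℝ) ^ Fintype.card ι = ((2 ^ Fintype.card ι : ℕ) : ℝ) := by push_cast; rfl
  rw [boxNorm, h, Real.rpow_inv_natCast_pow (gowersInner_const_nonneg hν F) (by positivity)]

theorem abs_gowersInner_le_prod_boxNorm (f : (ι → Bool) → (ι → ZMod N) → ℝ) :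
    |gowersInner ν f| ≤ ∏ ω, boxNorm ν (f ω) := by
  refine (pow_le_pow_iff_left₀ (abs_nonneg _) (prod_nonneg fun ω _ => boxNorm_nonneg hν _)
    (pow_ne_zero (Fintype.card ι) two_ne_zero)).1 ?_
  rw [(even_two_pow_card ι).pow_abs, ← prod_pow]
  simp only [boxNorm_pow_two_pow_card hν]
  exact gowersInner_pow_le_prod hν f

theorem boxNorm_mul (c : ℝ) (F : (ι → ZMod N) → ℝ) :
    boxNorm ν (fun x => c * F x) = |c| * boxNorm ν F := by
  refine (pow_left_inj₀ (boxNorm_nonneg hν _) (mul_nonneg (abs_nonneg c) (boxNorm_nonneg hν F))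
    (pow_ne_zero (Fintype.card ι) two_ne_zero)).1 ?_
  rw [boxNorm_pow_two_pow_card hν, mul_pow, boxNorm_pow_two_pow_card hν,
    (even_two_pow_card ι).pow_abs, gowersInner_mul]
  simp

theorem boxNorm_add_le (f g : (ι → ZMod N) → ℝ) :
    boxNorm ν (f + g) ≤ boxNorm ν f + boxNorm ν g := by
  refine (pow_le_pow_iff_left₀ (boxNorm_nonneg hν _)
    (add_nonneg (boxNorm_nonneg hν f) (boxNorm_nonneg hν g))
    (pow_ne_zero (Fintype.card ι) two_ne_zero)).1 ?_
  have hfg : f + g = ∑ b : Bool, cond b f g := by simp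
  calc boxNorm ν (f + g) ^ 2 ^ Fintype.card ι
      = ∑ c : (ι → Bool) → Bool, gowersInner ν (fun ω => cond (c ω) f g) := by
        rw [boxNorm_pow_two_pow_card hν, hfg, gowersInner_sum]
    _ ≤ ∑ c : (ι → Bool) → Bool, ∏ ω, cond (c ω) (boxNorm ν f) (boxNorm ν g) :=
        sum_le_sum fun c _ => (le_abs_self _).trans <|
          (abs_gowersInner_le_prod_boxNorm hν _).trans_eq <|
            prod_congr rfl fun ω _ => by cases c ω <;> rfl
    _ = (boxNorm ν f + boxNorm ν g) ^ 2 ^ Fintype.card ι := by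
        rw [← Fintype.prod_sum fun _ b => cond b (boxNorm ν f) (boxNorm ν g)]
        simp

end BoxNorm

/-- The weighted box norm is a seminorm. -/
theorem boxNorm_is_seminorm (N d : ℕ) [NeZero N] (hd : 1 ≤ d)
    (ν : (I : Finset (Fin d)) → (I → ZMod N) → ℝ)
    (hν : ∀ I : Finset (Fin d), I ≠ univ → ∀ z, 0 ≤ ν I z) :
    (∀ f : (Fin d → ZMod N) → ℝ, 0 ≤ boxNorm ν f) ∧
    (∀ (lam : ℝ) (f : (Fin d → ZMod N) → ℝ),
      boxNorm ν (fun x => lam * f x) = |lam| * boxNorm ν f) ∧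
    (∀ f g : (Fin d → ZMod N) → ℝ, boxNorm ν (f + g) ≤ boxNorm ν f + boxNorm ν g) := by
  have : Nonempty (Fin d) := ⟨⟨0, hd⟩⟩
  exact ⟨boxNorm_nonneg hν, boxNorm_mul hν, boxNorm_add_le hν⟩

end
end

section
/- Let N, d ≥ 1, let ν_I : (ZMod N)^I → ℝ for I ⊊ {1,…,d} be nonnegative weights, let ν_{[d]} : (ZMod N)^d → ℝ be nonnegative, let Ω ⊆ (ZMod N)^d have face structure, and let T > 1, C > 0, η > 0. Assume: (i) |Dg(x)| ≤ T for every g ∈ S_T and every x ∈ Ω; (ii) there are constants C(0), C(1), C(2), … such that for every m ≥ 0 and all g_1,…,g_m ∈ S_T, |⟨∏_{j=1}^m Dg_j, f⟩_ν| ≤ C(m) for every f with ‖f‖_{□,ν} ≤ 1 (the empty product being the constant function 1); (iii) φ = Σ_{i=1}^k λ_i Dg_i with g_i ∈ S_T and Σ_{i=1}^k |λ_i| ≤ C. Then |φ(x)| ≤ CT for all x, and there exists a real polynomial P(u) = Σ_{j=0}^m a_j u^j with sup_{|u| ≤ CT} |P(u) − max(u,0)| ≤ η, such that sup_x |P(φ(x))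 − max(φ(x),0)| ≤ η and |⟨P∘φ, f⟩_ν| ≤ Σ_{j=0}^m C(j) |a_j| C^j for every f with ‖f‖_{□,ν} ≤ 1. -/
noncomputable section
open Finset

/-- The weighted inner product `⟨f,g⟩_ν`. -/
def wInner {ι : Type*} [Fintype ι] [DecidableEq ι] {N : ℕ} [NeZero N]
    (ν : (I : Finset ι) → (I → ZMod N) → ℝ) (f g : (ι → ZMod N) → ℝ) : ℝ :=
  Finset.expect Finset.univ fun x : ι → ZMod N =>
    f x * g x * ∏ I ∈ univ.filter (fun I : Finset ι => I ≠ univ), ν I (fun i => x i.1)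

/-- The dual function `Df`. -/
def dualFn {ι : Type*} [Fintype ι] [DecidableEq ι] {N : ℕ} [NeZero N]
    (ν : (I : Finset ι) → (I → ZMod N) → ℝ) (f : (ι → ZMod N) → ℝ)
    (x : ι → ZMod N) : ℝ :=
  Finset.expect Finset.univ fun y : ι → ZMod N =>
    (∏ ω ∈ univ.filter (fun ω : ι → Bool => ω ≠ fun _ => false), f (proj ω x y)) *
      ∏ I ∈ univ.filter (fun I : Finset ι => I ≠ univ),
        ∏ ω ∈ univ.filter (fun ω : I → Bool => ω ≠ fun _ => false), ν I (projI ω x y)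

/-- A set `Ω` has face structure if it is the intersection of sets `Ω_J` over `∅ ≠ J ⊊ ι`,
where membership in `Ω_J` depends only on the coordinates outside of `J`. -/
def HasFaceStructure {ι : Type*} [Fintype ι] [DecidableEq ι] {N : ℕ}
    (Ω : Set (ι → ZMod N)) : Prop :=
  ∃ ΩJ : Finset ι → Set (ι → ZMod N),
    (∀ J : Finset ι, J ≠ ∅ → J ≠ univ →
      ∀ x y : ι → ZMod N, (∀ i, i ∉ J → x i = y i) → (x ∈ ΩJ J → y ∈ ΩJ J)) ∧
    Ω = ⋂ J ∈ {J : Finset ι | J ≠ ∅ ∧ J ≠ univ}, ΩJ J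

/-- `F_T`: functions supported on `Ω`. -/
def FT {ι : Type*} {N : ℕ} (Ω : Set (ι → ZMod N)) : Set ((ι → ZMod N) → ℝ) :=
  {f | ∀ x, x ∉ Ω → f x = 0}

/-- `S_T`: functions supported on `Ω` and dominated by `ν_{[d]} + 2`. -/
def STset {ι : Type*} {N : ℕ} (Ω : Set (ι → ZMod N)) (νd : (ι → ZMod N) → ℝ) :
    Set ((ι → ZMod N) → ℝ) :=
  {f | f ∈ FT Ω ∧ ∀ x, |f x| ≤ νd x + 2}

/-!
Since `g ∈ S_T` vanishes off `Ω` and `Ω` has face structure, every dual function `Dg` vanishes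
off `Ω`, so `|Dg| ≤ T` everywhere and `|φ| ≤ CT`. Weierstrass gives a polynomial `P` that is
`η`-close to `max u 0` on `[-CT, CT]`. Expanding `φ^j` multinomially writes it as a combination
of products of `j` dual functions with coefficients of total mass `(∑ |λ_i|)^j ≤ C^j`, so
`|⟨φ^j, f⟩_ν| ≤ C(j) C^j`, and linearity of `⟨·, f⟩_ν` gives the bound for `P ∘ φ`.
-/

open Polynomial

lemma abs_sum_mul_le_sum_abs_mul {κ : Type*} (s : Finset κ) (lam a : κ → ℝ) {T : ℝ}
    (ha : ∀ i ∈ s, |a i| ≤ T) :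
    |∑ i ∈ s, lam i * a i| ≤ (∑ i ∈ s, |lam i|) * T :=
  calc |∑ i ∈ s, lam i * a i| ≤ ∑ i ∈ s, |lam i| * |a i| := by
        simpa only [abs_mul] using abs_sum_le_sum_abs (fun i => lam i * a i) s
    _ ≤ ∑ i ∈ s, |lam i| * T := by gcongr with i hi; exact ha i hi
    _ = (∑ i ∈ s, |lam i|) * T := (sum_mul ..).symm

lemma exists_polynomial_abs_sub_max_zero_le (R : ℝ) {η : ℝ} (hη : 0 < η) :
    ∃ P : ℝ[X], ∀ u : ℝ, |u| ≤ R → |P.eval u - max u 0| ≤ η := by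
  obtain ⟨P, hP⟩ := exists_polynomial_near_of_continuousOn (-R) R (fun u => max u 0)
    (continuous_id.max continuous_const).continuousOn η hη
  exact ⟨P, fun u hu => (hP u (abs_le.1 hu)).le⟩

lemma zero_mem_STset {ι : Type*} {N : ℕ} {Ω : Set (ι → ZMod N)} {νd : (ι → ZMod N) → ℝ}
    (hνd : ∀ x, 0 ≤ νd x) : 0 ∈ STset Ω νd :=
  ⟨fun _ _ => rfl, fun x => by simpa using by linarith [hνd x]⟩

section Dual

variable {ι : Type*} [Fintype ι] [DecidableEq ι] {N : ℕ} {Ω : Set (ι → ZMod N)}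

/-- Take `ω` to be the indicator of a face `J` with `x ∉ Ω_J`: then `P_ω(x,y)` agrees with `x`
off `J`, so it also lies outside `Ω_J`. -/
lemma HasFaceStructure.exists_proj_notMem (hΩ : HasFaceStructure Ω) {x : ι → ZMod N}
    (hx : x ∉ Ω) : ∃ ω : ι → Bool, ω ≠ (fun _ => false) ∧ ∀ y, proj ω x y ∉ Ω := by
  obtain ⟨ΩJ, hdep, rfl⟩ := hΩ
  simp only [Set.mem_iInter, Set.mem_ofPred_eq, not_forall] at hx
  obtain ⟨J, ⟨hJ, hJuniv⟩, hxJ⟩ := hx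
  obtain ⟨j, hj⟩ := nonempty_iff_ne_empty.2 hJ
  refine ⟨fun i => decide (i ∈ J), fun h => by simpa [hj] using congrFun h j, fun y hy => ?_⟩
  exact hxJ (hdep J hJ hJuniv (proj _ x y) x (fun i hi => by simp [proj, hi])
    (Set.mem_iInter₂.1 hy J ⟨hJ, hJuniv⟩))

variable [NeZero N] {ν : (I : Finset ι) → (I → ZMod N) → ℝ} {g : (ι → ZMod N) → ℝ}

lemma dualFn_eq_zero_of_notMem (hΩ : HasFaceStructure Ω) (hg : g ∈ FT Ω) {x : ι → ZMod N}
    (hx : x ∉ Ω) : dualFn ν g x = 0 := by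
  obtain ⟨ω, hω, hproj⟩ := hΩ.exists_proj_notMem hx
  refine expect_eq_zero fun y _ => ?_
  rw [prod_eq_zero (mem_filter.2 ⟨mem_univ ω, hω⟩) (hg _ (hproj y)), zero_mul]

lemma abs_dualFn_le (hΩ : HasFaceStructure Ω) (hg : g ∈ FT Ω) {T : ℝ} (hT : 0 ≤ T)
    (hbound : ∀ x ∈ Ω, |dualFn ν g x| ≤ T) (x : ι → ZMod N) : |dualFn ν g x| ≤ T := by
  by_cases hx : x ∈ Ω
  · exact hbound x hx
  · rwa [dualFn_eq_zero_of_notMem hΩ hg hx, abs_zero]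

end Dual

section WInner

variable {ι : Type*} [Fintype ι] [DecidableEq ι] {N : ℕ} [NeZero N]
  (ν : (I : Finset ι) → (I → ZMod N) → ℝ)

lemma wInner_sum_left {κ : Type*} (s : Finset κ) (F : κ → (ι → ZMod N) → ℝ)
    (f : (ι → ZMod N) → ℝ) :
    wInner ν (fun x => ∑ t ∈ s, F t x) f = ∑ t ∈ s, wInner ν (F t) f := by
  simp only [wInner, sum_mul, expect_sum_comm]

lemma wInner_const_mul_left (c : ℝ) (F f : (ι → ZMod N) → ℝ) :
    wInner ν (fun x => c * F x) f = c * wInner ν F f := by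
  simp only [wInner, mul_expect, mul_assoc]

lemma abs_wInner_pow_sum_mul_le {κ : Type*} [Fintype κ] (lam : κ → ℝ)
    (D : κ → (ι → ZMod N) → ℝ) (f : (ι → ZMod N) → ℝ) (j : ℕ) {B : ℝ}
    (hprod : ∀ t : Fin j → κ, |wInner ν (fun x => ∏ l, D (t l) x) f| ≤ B) :
    |wInner ν (fun x => (∑ i, lam i * D i x) ^ j) f| ≤ (∑ i, |lam i|) ^ j * B := by
  have hexpand : (fun x => (∑ i, lam i * D i x) ^ j) =
      fun x => ∑ t : Fin j → κ, (∏ l, lam (t l)) * ∏ l, D (t l) x := by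
    simp only [Fintype.sum_pow, prod_mul_distrib]
  calc |wInner ν (fun x => (∑ i, lam i * D i x) ^ j) f|
      = |∑ t : Fin j → κ, (∏ l, lam (t l)) * wInner ν (fun x => ∏ l, D (t l) x) f| := by
        simp only [hexpand, wInner_sum_left, wInner_const_mul_left]
    _ ≤ (∑ t : Fin j → κ, |∏ l, lam (t l)|) * B :=
        abs_sum_mul_le_sum_abs_mul _ _ _ fun t _ => hprod t
    _ = (∑ i, |lam i|) ^ j * B := by simp only [abs_prod, Fintype.sum_pow]

lemma abs_wInner_eval_le (P : ℝ[X]) (φ f : (ι → ZMod N) → ℝ) (M : ℕ → ℝ)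
    (hpow : ∀ j, |wInner ν (fun x => φ x ^ j) f| ≤ M j) :
    |wInner ν (fun x => P.eval (φ x)) f| ≤
      ∑ j ∈ range (P.natDegree + 1), |P.coeff j| * M j := by
  simp only [eval_eq_sum_range, wInner_sum_left, wInner_const_mul_left]
  refine (abs_sum_le_sum_abs _ _).trans (sum_le_sum fun j _ => ?_)
  rw [abs_mul]
  exact mul_le_mul_of_nonneg_left (hpow j) (abs_nonneg _)

end WInner

theorem polynomial_approximation_general (N d : ℕ) [NeZero N]
    (ν : (I : Finset (Fin d)) → (I → ZMod N) → ℝ)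
    (νd : (Fin d → ZMod N) → ℝ) (hνd : ∀ x, 0 ≤ νd x)
    (Ω : Set (Fin d → ZMod N)) (hΩ : HasFaceStructure Ω)
    (T C η : ℝ) (hT : 1 < T) (hη : 0 < η)
    (Cm : ℕ → ℝ)
    (hdual : ∀ g ∈ STset Ω νd, ∀ x ∈ Ω, |dualFn ν g x| ≤ T)
    (hCm : ∀ (m : ℕ) (g : Fin m → ((Fin d → ZMod N) → ℝ)), (∀ j, g j ∈ STset Ω νd) →
      ∀ f : (Fin d → ZMod N) → ℝ, boxNorm ν f ≤ 1 →
        |wInner ν (fun x => ∏ j, dualFn ν (g j) x) f| ≤ Cm m)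
    (φ : (Fin d → ZMod N) → ℝ) (k : ℕ) (lam : Fin k → ℝ)
    (g : Fin k → ((Fin d → ZMod N) → ℝ)) (hg : ∀ i, g i ∈ STset Ω νd)
    (hφ : φ = fun x => ∑ i, lam i * dualFn ν (g i) x)
    (hlam : ∑ i, |lam i| ≤ C) :
    (∀ x, |φ x| ≤ C * T) ∧
    ∃ P : Polynomial ℝ,
      (∀ u : ℝ, |u| ≤ C * T → |P.eval u - max u 0| ≤ η) ∧
      (∀ x, |P.eval (φ x) - max (φ x) 0| ≤ η) ∧
      (∀ f : (Fin d → ZMod N) → ℝ, boxNorm ν f ≤ 1 →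
        |wInner ν (fun x => P.eval (φ x)) f| ≤
          ∑ j ∈ Finset.range (P.natDegree + 1), Cm j * |P.coeff j| * C ^ j) := by
  have hT0 : 0 ≤ T := by linarith
  have hφ_bound (x) : |φ x| ≤ C * T := by
    subst hφ
    refine (abs_sum_mul_le_sum_abs_mul _ _ _ fun i _ => ?_).trans (by gcongr)
    exact abs_dualFn_le hΩ (hg i).1 hT0 (hdual _ (hg i)) x
  obtain ⟨P, hP⟩ := exists_polynomial_abs_sub_max_zero_le (C * T) hη
  refine ⟨hφ_bound, P, hP, fun x => hP _ (hφ_bound x), fun f hf => ?_⟩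
  have hpow (j : ℕ) : |wInner ν (fun x => φ x ^ j) f| ≤ Cm j * C ^ j := by
    have hCm0 : 0 ≤ Cm j :=
      (abs_nonneg _).trans (hCm j (fun _ => 0) (fun _ => zero_mem_STset hνd) f hf)
    calc |wInner ν (fun x => φ x ^ j) f| ≤ (∑ i, |lam i|) ^ j * Cm j := by
          subst hφ
          exact abs_wInner_pow_sum_mul_le ν lam _ f j fun t =>
            hCm j _ (fun l => hg (t l)) f hf
      _ ≤ Cm j * C ^ j := by rw [mul_comm]; gcongr
  calc |wInner ν (fun x => P.eval (φ x)) f|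
      ≤ ∑ j ∈ range (P.natDegree + 1), |P.coeff j| * (Cm j * C ^ j) :=
        abs_wInner_eval_le ν P φ f _ hpow
    _ = ∑ j ∈ range (P.natDegree + 1), Cm j * |P.coeff j| * C ^ j :=
        sum_congr rfl fun j _ => by ring

/-- Polynomial approximation of the positive part of a bounded combination of dual functions,
with control of the dual box norm. -/
theorem polynomial_approximation (N d : ℕ) [NeZero N] (hd : 1 ≤ d)
    (ν : (I : Finset (Fin d)) → (I → ZMod N) → ℝ)
    (hν : ∀ I : Finset (Fin d), I ≠ univ → ∀ z, 0 ≤ ν I z)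
    (νd : (Fin d → ZMod N) → ℝ) (hνd : ∀ x, 0 ≤ νd x)
    (Ω : Set (Fin d → ZMod N)) (hΩ : HasFaceStructure Ω)
    (T C η : ℝ) (hT : 1 < T) (hC : 0 < C) (hη : 0 < η)
    (Cm : ℕ → ℝ)
    (hdual : ∀ g ∈ STset Ω νd, ∀ x ∈ Ω, |dualFn ν g x| ≤ T)
    (hCm : ∀ (m : ℕ) (g : Fin m → ((Fin d → ZMod N) → ℝ)), (∀ j, g j ∈ STset Ω νd) →
      ∀ f : (Fin d → ZMod N) → ℝ, boxNorm ν f ≤ 1 →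
        |wInner ν (fun x => ∏ j, dualFn ν (g j) x) f| ≤ Cm m)
    (φ : (Fin d → ZMod N) → ℝ) (k : ℕ) (lam : Fin k → ℝ)
    (g : Fin k → ((Fin d → ZMod N) → ℝ)) (hg : ∀ i, g i ∈ STset Ω νd)
    (hφ : φ = fun x => ∑ i, lam i * dualFn ν (g i) x)
    (hlam : ∑ i, |lam i| ≤ C) :
    (∀ x, |φ x| ≤ C * T) ∧
    ∃ P : Polynomial ℝ,
      (∀ u : ℝ, |u| ≤ C * T → |P.eval u - max u 0| ≤ η) ∧
      (∀ x, |P.eval (φ x) - max (φ x) 0| ≤ η) ∧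
      (∀ f : (Fin d → ZMod N) → ℝ, boxNorm ν f ≤ 1 →
        |wInner ν (fun x => P.eval (φ x)) f| ≤
          ∑ j ∈ Finset.range (P.natDegree + 1), Cm j * |P.coeff j| * C ^ j) :=
  polynomial_approximation_general N d ν νd hνd Ω hΩ T C η hT hη Cm hdual hCm φ k lam g hg hφ hlam

end
end

section
/- (Transference principle.) For every d ≥ 1, every T > 1, every η ∈ (0,1), every κ > 0 and every function C : ℕ → (0,∞) there exists ε > 0 such that the following holds for every N ≥ 1. Let ν_I : (ZMod N)^I → ℝ for I ⊊ {1,…,d} be nonnegative weights, let ν_{[d]} : (ZMod N)^d → ℝ be nonnegative, and let Ω ⊆ (ZMod N)^d have face structure. Assume: (i) |Dg(x)| ≤ T for every g ∈ S_T and every x ∈ Ω; (ii) for every m ≥ 0 and all g_1,…,g_m ∈ S_T, |⟨∏_{j=1}^m Dg_j, f⟩_ν| ≤ C(m) whenever ‖f‖_{□,ν} ≤ 1; (iii) ⟨f, Df⟩_ν > 0 for every nonzero f ∈ F_T; (iv) ‖ν_{[d]} − 1‖_{□,ν} ≤ ε, ⟨ν_{[d]}, 1⟩_ν ≤ 1 +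 ε and ⟨1, 1⟩_ν ≤ 1 + ε; (v) ⟨ν_{[d]}·1_{Ω^c}, 1⟩_ν ≤ κ. Then for every f : (ZMod N)^d → ℝ with 0 ≤ f ≤ ν_{[d]} pointwise there exist f_1, f_2, f_3 : (ZMod N)^d → ℝ such that f = f_1 + f_2 + f_3, 0 ≤ f_1 ≤ 2 pointwise with f_1 vanishing outside Ω, ‖f_2‖_{□,ν} ≤ η with f_2 vanishing outside Ω, and 0 ≤ f_3 ≤ ν_{[d]} pointwise with f_3 vanishing on Ω and ⟨f_3, 1⟩_ν ≤ κ. -/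
/-!
A Hahn–Banach dichotomy in the finite-dimensional space of functions on `(ZMod N)^d`.
Put `λ = η^(2^d)`, let `K` be the functions `0 ≤ a ≤ 2` supported on `Ω` and `B` the functions
`b` with `⟨b, Dh⟩_ν ≤ λ` for all `h ∈ S_T`. If `f 1_Ω = a + b` with `a ∈ K` and `b ∈ B`, then `b ∈ S_T`, hence
`‖b‖_{□,ν}^(2^d) = ⟨b, Db⟩_ν ≤ λ` (nonnegative by (iii)), and `f₃ = f 1_{Ωᶜ}` is controlled by (v).

Otherwise a functional separating `f 1_Ω` from the closed convex set `K + B` is, by the bipolar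
argument, a convex combination `Φ` of dual functions with `⟨f 1_Ω, Φ⟩_ν > λ > ⟨a, Φ⟩_ν` for all
`a ∈ K`. Testing `a = 2 · 1_{Φ > 0}` gives `⟨1, Φ⁺⟩_ν < λ / 2`, whereas
`⟨f 1_Ω, Φ⟩_ν ≤ ⟨ν_{[d]}, Φ⁺⟩_ν = ⟨1, Φ⁺⟩_ν + ⟨ν_{[d]} - 1, Φ⁺⟩_ν`. The last term is small:
`|Φ| ≤ T` by (i) and the face structure, so `Φ⁺` is uniformly close to a polynomial in `Φ`, and
`Φ^k` is a convex combination of products of `k` dual functions, against which `ν_{[d]} - 1` has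
inner product at most `C(k) ε` by (ii) and (iv).
-/

noncomputable section
open Finset

open scoped Pointwise Polynomial

theorem IsCompact.convexHull_of_finiteDimensional {E : Type*} [NormedAddCommGroup E]
    [NormedSpace ℝ E] [FiniteDimensional ℝ E] {s : Set E} (hs : IsCompact s) :
    IsCompact (convexHull ℝ s) := by
  -- Carathéodory: `finrank E + 1` points of `s` suffice.
  set n := Module.finrank ℝ E + 1
  have hhull : convexHull ℝ s = (fun q : (Fin n → ℝ) × (Fin n → E) => ∑ i, q.1 i • q.2 i) ''
      (stdSimplex ℝ (Fin n) ×ˢ Set.univ.pi fun _ => s) := by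
    refine subset_antisymm (fun x hx => ?_) ?_
    · obtain ⟨ι, _, z, w, hzs, hz, hw0, hw1, rfl⟩ := eq_pos_convex_span_of_mem_convexHull hx
      obtain ⟨e⟩ : Nonempty (ι ↪ Fin n) := Function.Embedding.nonempty_of_card_le <| by
        simpa using hz.card_le_finrank_succ.trans (Nat.succ_le_succ (Submodule.finrank_le _))
      obtain ⟨i₀⟩ : Nonempty ι := by
        by_contra h
        simp [not_nonempty_iff.1 h] at hw1
      have extend_mem_s (j : Fin n) : Function.extend e z (fun _ => z i₀) j ∈ s := by
        by_cases hj : ∃ i, e i = j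
        · obtain ⟨i, rfl⟩ := hj
          simpa [e.injective.extend_apply] using hzs (Set.mem_range_self i)
        · simpa [Function.extend_apply' _ _ _ hj] using hzs (Set.mem_range_self i₀)
      refine ⟨(Function.extend e w 0, Function.extend e z fun _ => z i₀),
        ⟨⟨fun j => ?_, ?_⟩, fun j _ => extend_mem_s j⟩, ?_⟩
      · by_cases hj : ∃ i, e i = j
        · obtain ⟨i, rfl⟩ := hj
          simpa [e.injective.extend_apply] using (hw0 i).le
        · simp [Function.extend_apply' _ _ _ hj]
      · rw [← hw1]
        refine (Fintype.sum_of_injective e e.injective _ _ (fun j hj => ?_) fun i => ?_).symm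
        · simp [Function.extend_apply' _ _ _ hj]
        · simp [e.injective.extend_apply]
      · refine (Fintype.sum_of_injective e e.injective _ _ (fun j hj => ?_) fun i => ?_).symm
        · simp [Function.extend_apply' _ _ _ hj]
        · simp [e.injective.extend_apply]
    · rintro _ ⟨⟨w, z⟩, ⟨hw, hz⟩, rfl⟩
      exact (convex_convexHull ℝ s).sum_mem (fun i _ => hw.1 i) (by simpa using hw.2)
        fun i _ => subset_convexHull ℝ s (hz i trivial)
  rw [hhull]
  exact ((isCompact_stdSimplex ℝ (Fin n)).prod (isCompact_univ_pi fun _ => hs)).image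
    (by fun_prop)

theorem ContinuousLinearMap.apply_eq_dotProduct {ι : Type*} [Fintype ι] [DecidableEq ι]
    (L : (ι → ℝ) →L[ℝ] ℝ) (a : ι → ℝ) : L a = a ⬝ᵥ fun i => L (Pi.single i 1) := by
  have := (L : (ι → ℝ) →ₗ[ℝ] ℝ).pi_apply_eq_sum_univ a
  simp only [ContinuousLinearMap.coe_coe] at this
  rw [this, dotProduct]
  refine Finset.sum_congr rfl fun i _ => ?_
  rw [smul_eq_mul]
  congr 2
  funext j
  simp [Pi.single_apply, eq_comm]

theorem mem_add_polar_or_exists_mem_convexHull {ι : Type*} [Fintype ι] {K S : Set (ι → ℝ)}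
    (hKconv : Convex ℝ K) (hK : IsCompact K) (hK0 : 0 ∈ K) (hS : IsCompact S) (hS0 : 0 ∈ S)
    (g : ι → ℝ) :
    g ∈ K + {b | ∀ s ∈ S, b ⬝ᵥ s ≤ 1} ∨
      ∃ p ∈ convexHull ℝ S, 1 < g ⬝ᵥ p ∧ ∀ k ∈ K, k ⬝ᵥ p < 1 := by
  classical
  set B := {b : ι → ℝ | ∀ s ∈ S, b ⬝ᵥ s ≤ 1}
  have hB : B = ⋂ s ∈ S, {b | b ⬝ᵥ s ≤ 1} := by ext; simp [B]
  have hBconv : Convex ℝ B := hB ▸ convex_iInter₂ fun s _ =>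
    (convex_Iic 1).linear_preimage (dotProductBilin ℝ ℝ |>.flip s)
  have hBclosed : IsClosed B := hB ▸ isClosed_biInter fun s _ =>
    isClosed_le (by fun_prop) continuous_const
  have hB0 : 0 ∈ B := fun s _ => by rw [zero_dotProduct]; exact zero_le_one
  refine or_iff_not_imp_left.2 fun hg => ?_
  obtain ⟨L, u, hLK, hLg⟩ := geometric_hahn_banach_closed_point (hKconv.add hBconv)
    (hBclosed.add_left_of_isCompact hK) hg
  set ℓ : ι → ℝ := fun i => L (Pi.single i 1)
  have hLK' (k : ι → ℝ) (b : ι → ℝ) (hk : k ∈ K) (hb : b ∈ B) : k ⬝ᵥ ℓ + b ⬝ᵥ ℓ < u := by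
    rw [← add_dotProduct, ← L.apply_eq_dotProduct]
    exact hLK _ (Set.add_mem_add hk hb)
  have hu : 0 < u := by simpa using hLK' 0 0 hK0 hB0
  refine ⟨u⁻¹ • ℓ, ?_, ?_, fun k hk => ?_⟩
  · -- Otherwise a functional `M` separating `u⁻¹ • ℓ` from the hull of `S` gives an element
    -- `v⁻¹ • m` of `B` on which `ℓ` exceeds `u`.
    by_contra hp
    obtain ⟨M, v, hMS, hMp⟩ := geometric_hahn_banach_closed_point (convex_convexHull ℝ S)
      hS.convexHull_of_finiteDimensional.isClosed hp
    set m : ι → ℝ := fun i => M (Pi.single i 1)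
    have hv : 0 < v := by simpa using hMS 0 (subset_convexHull ℝ S hS0)
    have hmB : v⁻¹ • m ∈ B := fun s hs => by
      have := hMS s (subset_convexHull ℝ S hs)
      rw [M.apply_eq_dotProduct, dotProduct_comm] at this
      rw [smul_dotProduct, smul_eq_mul, inv_mul_le_iff₀ hv, mul_one]
      exact this.le
    have h1 := hLK' 0 _ hK0 hmB
    rw [M.apply_eq_dotProduct, smul_dotProduct, smul_eq_mul, dotProduct_comm,
      lt_inv_mul_iff₀ hu] at hMp
    rw [zero_dotProduct, zero_add, smul_dotProduct, smul_eq_mul, inv_mul_lt_iff₀ hv] at h1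
    linarith
  · rw [dotProduct_smul, smul_eq_mul, lt_inv_mul_iff₀ hu, mul_one, ← L.apply_eq_dotProduct]
    exact hLg
  · have := hLK' k 0 hk hB0
    rw [zero_dotProduct, add_zero] at this
    rw [dotProduct_smul, smul_eq_mul, inv_mul_lt_iff₀ hu, mul_one]
    exact this

theorem mul_mem_convexHull_mul {R : Type*} [Ring R] [Algebra ℝ R] {s t : Set R} {a b : R}
    (ha : a ∈ convexHull ℝ s) (hb : b ∈ convexHull ℝ t) : a * b ∈ convexHull ℝ (s * t) := by
  have hleft (a : R) (ha : a ∈ s) : ∀ b ∈ convexHull ℝ t, a * b ∈ convexHull ℝ (s * t) :=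
    convexHull_min (fun b hb => subset_convexHull ℝ _ (Set.mul_mem_mul ha hb))
      ((convex_convexHull ℝ _).linear_preimage (LinearMap.mulLeft ℝ a))
  exact convexHull_min (fun a ha => hleft a ha b hb)
    ((convex_convexHull ℝ _).linear_preimage (LinearMap.mulRight ℝ b)) ha

theorem pow_mem_convexHull_pow {R : Type*} [Ring R] [Algebra ℝ R] {s : Set R} {a : R}
    (ha : a ∈ convexHull ℝ s) (n : ℕ) : a ^ n ∈ convexHull ℝ (s ^ n) := by
  induction n with
  | zero => exact subset_convexHull ℝ _ (by simp)
  | succ n ih => rw [pow_succ, pow_succ]; exact mul_mem_convexHull_mul ih ha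

theorem abs_map_aeval_le {R : Type*} [Ring R] [Algebra ℝ R] (ℓ : R →ₗ[ℝ] ℝ) (Q : ℝ[X])
    (r : R) {B : ℕ → ℝ} (hB : ∀ k, |ℓ (r ^ k)| ≤ B k) :
    |ℓ (Polynomial.aeval r Q)| ≤ ∑ k ∈ range (Q.natDegree + 1), |Q.coeff k| * B k := by
  rw [Polynomial.aeval_eq_sum_range, map_sum]
  refine (abs_sum_le_sum_abs _ _).trans (sum_le_sum fun k _ => ?_)
  rw [map_smul, smul_eq_mul, abs_mul]
  exact mul_le_mul_of_nonneg_left (hB k) (abs_nonneg _)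

theorem Real.mul_rpow_of_pos_left {x : ℝ} (hx : 0 < x) (y z : ℝ) :
    (x * y) ^ z = x ^ z * y ^ z := by
  rcases le_or_gt 0 y with hy | hy
  · exact Real.mul_rpow hx.le hy
  · rw [Real.rpow_def_of_neg (mul_neg_of_pos_of_neg hx hy), Real.rpow_def_of_neg hy,
      Real.rpow_def_of_pos hx, Real.log_mul hx.ne' hy.ne, add_mul, Real.exp_add]
    ring

lemma Finset.prod_univ_eq_mul_prod_filter_ne {α M : Type*} [Fintype α] [DecidableEq α]
    [CommMonoid M] (F : α → M) (a : α) : ∏ ω, F ω = F a * ∏ ω ∈ univ.filter (· ≠ a), F ω := by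
  rw [filter_ne', mul_prod_erase _ _ (mem_univ a)]

section

variable {ι : Type*} {N : ℕ}

lemma convex_FT (Ω : Set (ι → ZMod N)) : Convex ℝ (FT Ω) :=
  fun f hf g hg a b _ _ _ x hx => by simp [hf x hx, hg x hx]

lemma isClosed_FT (Ω : Set (ι → ZMod N)) : IsClosed (FT Ω) := by
  have : FT Ω = ⋂ x ∈ Ωᶜ, {f | f x = 0} := by ext; simp [FT]
  exact this ▸ isClosed_biInter fun x _ => isClosed_eq (continuous_apply x) continuous_const

def boundedFT (Ω : Set (ι → ZMod N)) : Set ((ι → ZMod N) → ℝ) :=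
  FT Ω ∩ Set.univ.pi fun _ => Set.Icc 0 2

lemma convex_boundedFT (Ω : Set (ι → ZMod N)) : Convex ℝ (boundedFT Ω) :=
  (convex_FT Ω).inter (convex_pi fun _ _ => convex_Icc 0 2)

lemma isCompact_boundedFT (Ω : Set (ι → ZMod N)) : IsCompact (boundedFT Ω) :=
  (isCompact_univ_pi fun _ => isCompact_Icc).inter_left (isClosed_FT Ω)

lemma mem_STset_of_add_eq {Ω : Set (ι → ZMod N)} {νd a b g : (ι → ZMod N) → ℝ}
    (ha : a ∈ boundedFT Ω) (hg : g ∈ FT Ω) (hgν : ∀ x, 0 ≤ g x ∧ g x ≤ νd x) (hab : a + b = g) :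
    b ∈ STset Ω νd := by
  have hb : b = g - a := eq_sub_of_add_eq' hab
  refine ⟨fun x hx => by simp [hb, hg x hx, ha.1 x hx], fun x => abs_le.2 ?_⟩
  have := ha.2 x trivial
  simp only [hb, Pi.sub_apply]
  constructor <;> linarith [hgν x, this.1, this.2]

lemma isCompact_STset (Ω : Set (ι → ZMod N)) (νd : (ι → ZMod N) → ℝ) :
    IsCompact (STset Ω νd) := by
  have : STset Ω νd = FT Ω ∩ Set.univ.pi fun x => Set.Icc (-(νd x + 2)) (νd x + 2) := by
    ext f
    simp only [STset, Set.mem_ofPred_eq, Set.mem_inter_iff, Set.mem_univ_pi, Set.mem_Icc, abs_le]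
  exact this ▸ (isCompact_univ_pi fun _ => isCompact_Icc).inter_left (isClosed_FT Ω)

variable [Fintype ι] [DecidableEq ι] {ν : (I : Finset ι) → (I → ZMod N) → ℝ}

def innerWeight (ν : (I : Finset ι) → (I → ZMod N) → ℝ) (x : ι → ZMod N) : ℝ :=
  ∏ I ∈ univ.filter (fun I : Finset ι => I ≠ univ), ν I (fun i => x i.1)

lemma innerWeight_nonneg (hν : ∀ I : Finset ι, I ≠ univ → ∀ z, 0 ≤ ν I z) (x : ι → ZMod N) :
    0 ≤ innerWeight ν x :=
  prod_nonneg fun I hI => hν I (mem_filter.1 hI).2 _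

variable [NeZero N]

lemma wInner_eq_dotProduct (f g : (ι → ZMod N) → ℝ) :
    wInner ν f g =
      f ⬝ᵥ ((fun x => innerWeight ν x / Fintype.card (ι → ZMod N)) * g) := by
  rw [wInner, Fintype.expect_eq_sum_div_card, dotProduct, sum_div]
  refine sum_congr rfl fun x _ => ?_
  simp only [innerWeight, Pi.mul_apply]
  ring

def wInnerₗ (ν : (I : Finset ι) → (I → ZMod N) → ℝ) (f : (ι → ZMod N) → ℝ) :
    ((ι → ZMod N) → ℝ) →ₗ[ℝ] ℝ where
  toFun := wInner ν f
  map_add' g g' := by simp only [wInner_eq_dotProduct, mul_add, dotProduct_add]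
  map_smul' c g := by
    simp only [wInner_eq_dotProduct, mul_smul_comm, dotProduct_smul, RingHom.id_apply]

@[simp] lemma wInnerₗ_apply (f g : (ι → ZMod N) → ℝ) : wInnerₗ ν f g = wInner ν f g := rfl

lemma wInner_comm (f g : (ι → ZMod N) → ℝ) : wInner ν f g = wInner ν g f := by
  simp only [wInner, mul_comm (f _)]

lemma wInner_le_wInner (hν : ∀ I : Finset ι, I ≠ univ → ∀ z, 0 ≤ ν I z)
    {f g f' g' : (ι → ZMod N) → ℝ} (h : ∀ x, f x * g x ≤ f' x * g' x) :
    wInner ν f g ≤ wInner ν f' g' :=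
  expect_le_expect fun x _ => mul_le_mul_of_nonneg_right (h x) (innerWeight_nonneg hν x)

lemma abs_wInner_le_of_mem_convexHull {f ψ : (ι → ZMod N) → ℝ} {P : Set ((ι → ZMod N) → ℝ)}
    {C : ℝ} (hP : ∀ φ ∈ P, |wInner ν f φ| ≤ C) (hψ : ψ ∈ convexHull ℝ P) :
    |wInner ν f ψ| ≤ C := by
  have hconv : Convex ℝ {φ | |wInner ν f φ| ≤ C} := by
    have : {φ | |wInner ν f φ| ≤ C} = wInnerₗ ν f ⁻¹' Set.Icc (-C) C := by
      ext; simp [abs_le]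
    exact this ▸ (convex_Icc (-C) C).linear_preimage (wInnerₗ ν f)
  exact convexHull_min hP hconv hψ

lemma gowersInner_smul (c : ℝ) (f : (ι → ZMod N) → ℝ) :
    gowersInner ν (fun _ => c • f) = c ^ 2 ^ Fintype.card ι * gowersInner ν (fun _ => f) := by
  simp only [gowersInner, mul_expect]
  refine expect_congr rfl fun x _ => expect_congr rfl fun y _ => ?_
  simp only [Pi.smul_apply, smul_eq_mul, prod_mul_distrib, prod_const, card_univ,
    Fintype.card_fun, Fintype.card_bool]
  ring

lemma boxNorm_smul {c : ℝ} (hc : 0 < c) (f : (ι → ZMod N) → ℝ) :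
    boxNorm ν (c • f) = c * boxNorm ν f := by
  rw [boxNorm, boxNorm, gowersInner_smul, Real.mul_rpow_of_pos_left (by positivity),
    ← Real.rpow_natCast, ← Real.rpow_mul hc.le]
  norm_num

lemma boxNorm_le_of_gowersInner_le {f : (ι → ZMod N) → ℝ} {η : ℝ} (hη : 0 ≤ η)
    (h0 : 0 ≤ gowersInner ν (fun _ => f)) (h : gowersInner ν (fun _ => f) ≤ η ^ 2 ^ Fintype.card ι) :
    boxNorm ν f ≤ η := by
  calc boxNorm ν f ≤ (η ^ 2 ^ Fintype.card ι) ^ ((2 : ℝ) ^ Fintype.card ι)⁻¹ :=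
        Real.rpow_le_rpow h0 h (by positivity)
    _ = η := by
        rw [← Real.rpow_natCast, ← Real.rpow_mul hη]
        norm_num

lemma abs_wInner_le_mul_of_boxNorm_le {f φ : (ι → ZMod N) → ℝ} {ε C : ℝ} (hε : 0 < ε)
    (hf : boxNorm ν f ≤ ε) (hφ : ∀ f', boxNorm ν f' ≤ 1 → |wInner ν φ f'| ≤ C) :
    |wInner ν f φ| ≤ C * ε := by
  have h := hφ (ε⁻¹ • f) <| by
    rw [boxNorm_smul (inv_pos.2 hε), inv_mul_le_iff₀ hε, mul_one]
    exact hf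
  rw [← wInnerₗ_apply, map_smul, smul_eq_mul, abs_mul, abs_of_pos (inv_pos.2 hε),
    inv_mul_le_iff₀ hε, wInnerₗ_apply, wInner_comm] at h
  linarith

lemma wInner_dualFn_self (f : (ι → ZMod N) → ℝ) :
    wInner ν f (dualFn ν f) = gowersInner ν (fun _ => f) := by
  simp only [wInner, dualFn, gowersInner, weightProd, mul_expect, expect_mul]
  refine expect_congr rfl fun x _ => expect_congr rfl fun y _ => ?_
  rw [prod_univ_eq_mul_prod_filter_ne _ (fun _ => false),
    prod_congr rfl fun I _ => prod_univ_eq_mul_prod_filter_ne _ (fun _ => false),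
    prod_mul_distrib]
  have hx : proj (fun _ => false) x y = x := rfl
  have hxI (I : Finset ι) : projI (fun _ => false : I → Bool) x y = fun i => x i.1 := rfl
  simp only [hx, hxI]
  ring

lemma dualFn_mem_FT {Ω : Set (ι → ZMod N)} (hΩ : HasFaceStructure Ω) {f : (ι → ZMod N) → ℝ}
    (hf : f ∈ FT Ω) : dualFn ν f ∈ FT Ω := by
  obtain ⟨ΩJ, hΩJ, rfl⟩ := hΩ
  intro x hx
  obtain ⟨J, hJ0, hJ, hxJ⟩ : ∃ J : Finset ι, J ≠ ∅ ∧ J ≠ univ ∧ x ∉ ΩJ J := by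
    simpa using hx
  -- The vertex `P_ω(x, y)` with `ω = 1_J` agrees with `x` off `J`, hence lies outside `ΩJ J`.
  have hvertex (y : ι → ZMod N) : proj (fun i => decide (i ∈ J)) x y ∉ ΩJ J :=
    fun h => hxJ (hΩJ J hJ0 hJ _ x (fun i hi => by simp [proj, hi]) h)
  have hω : (fun i => decide (i ∈ J)) ∈ univ.filter (fun ω : ι → Bool => ω ≠ fun _ => false) :=
    mem_filter.2 ⟨mem_univ _, fun h => by
      obtain ⟨j, hj⟩ := nonempty_iff_ne_empty.2 hJ0
      simpa [hj] using congrFun h j⟩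
  refine expect_eq_zero fun y _ => ?_
  rw [prod_eq_zero hω (hf _ fun h => hvertex y (Set.mem_iInter₂.1 h J ⟨hJ0, hJ⟩)), zero_mul]

lemma dualFn_zero [Nonempty ι] : dualFn ν (0 : (ι → ZMod N) → ℝ) = 0 := by
  funext x
  refine expect_eq_zero fun y _ => ?_
  have hω : (fun _ => true) ∈ univ.filter (fun ω : ι → Bool => ω ≠ fun _ => false) :=
    mem_filter.2 ⟨mem_univ _, fun h => by simpa using congrFun h (Classical.arbitrary ι)⟩
  rw [prod_eq_zero hω rfl, zero_mul]

lemma continuous_dualFn : Continuous (dualFn ν : ((ι → ZMod N) → ℝ) → (ι → ZMod N) → ℝ) := by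
  unfold dualFn
  simp only [Fintype.expect_eq_sum_div_card]
  fun_prop

lemma mem_add_or_exists_mem_convexHull_wInner {K A : Set ((ι → ZMod N) → ℝ)}
    (hKconv : Convex ℝ K) (hK : IsCompact K) (hK0 : 0 ∈ K) (hA : IsCompact A) (hA0 : 0 ∈ A)
    {lam : ℝ} (hlam : 0 < lam) (g : (ι → ZMod N) → ℝ) :
    g ∈ K + {b | ∀ φ ∈ A, wInner ν b φ ≤ lam} ∨
      ∃ Φ ∈ convexHull ℝ A, lam < wInner ν g Φ ∧ ∀ k ∈ K, wInner ν k Φ < lam := by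
  set R : ((ι → ZMod N) → ℝ) →ₗ[ℝ] ((ι → ZMod N) → ℝ) :=
    lam⁻¹ • LinearMap.mulLeft ℝ fun x => innerWeight ν x / Fintype.card (ι → ZMod N)
  have hR (b φ : (ι → ZMod N) → ℝ) : wInner ν b φ = lam * (b ⬝ᵥ R φ) := by
    simp [R, wInner_eq_dotProduct, dotProduct_smul, hlam.ne']
  refine (mem_add_polar_or_exists_mem_convexHull hKconv hK hK0
    (hA.image R.continuous_of_finiteDimensional) ⟨0, hA0, map_zero R⟩ g).imp ?_ ?_
  · rintro ⟨k, hk, b, hb, rfl⟩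
    exact ⟨k, hk, b, fun φ hφ => by
      rw [hR, mul_le_iff_le_one_right hlam]; exact hb _ ⟨φ, hφ, rfl⟩, rfl⟩
  · rintro ⟨_, hp, hgp, hKp⟩
    obtain ⟨Φ, hΦ, rfl⟩ := (R.image_convexHull A).symm ▸ hp
    refine ⟨Φ, hΦ, by rwa [hR, lt_mul_iff_one_lt_right hlam], fun k hk => ?_⟩
    rw [hR, mul_lt_iff_lt_one_right hlam]
    exact hKp k hk

lemma mem_FT_of_mem_convexHull_dualFn {Ω : Set (ι → ZMod N)} (hΩ : HasFaceStructure Ω)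
    {νd : (ι → ZMod N) → ℝ} {T : ℝ} (hT : 0 ≤ T)
    (hDT : ∀ g ∈ STset Ω νd, ∀ x ∈ Ω, |dualFn ν g x| ≤ T) {Φ : (ι → ZMod N) → ℝ}
    (hΦ : Φ ∈ convexHull ℝ (dualFn ν '' STset Ω νd)) :
    Φ ∈ FT Ω ∧ ∀ x, |Φ x| ≤ T := by
  have hsub : dualFn ν '' STset Ω νd ⊆ FT Ω ∩ Set.univ.pi fun _ => Set.Icc (-T) T := by
    rintro _ ⟨g, hg, rfl⟩
    refine ⟨dualFn_mem_FT hΩ hg.1, fun x _ => abs_le.1 ?_⟩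
    by_cases hx : x ∈ Ω
    · exact hDT g hg x hx
    · rwa [dualFn_mem_FT hΩ hg.1 x hx, abs_zero]
  obtain ⟨hFT, hbd⟩ := convexHull_min hsub
    ((convex_FT Ω).inter (convex_pi fun _ _ => convex_Icc _ _)) hΦ
  exact ⟨hFT, fun x => abs_le.2 (hbd x trivial)⟩

lemma abs_wInner_pow_le_of_mem_convexHull_dualFn {Ω : Set (ι → ZMod N)}
    {νd f : (ι → ZMod N) → ℝ} {C : ℕ → ℝ}
    (hC : ∀ (m : ℕ) (g : Fin m → ((ι → ZMod N) → ℝ)), (∀ j, g j ∈ STset Ω νd) →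
      |wInner ν f (fun x => ∏ j, dualFn ν (g j) x)| ≤ C m)
    {Φ : (ι → ZMod N) → ℝ} (hΦ : Φ ∈ convexHull ℝ (dualFn ν '' STset Ω νd)) (k : ℕ) :
    |wInner ν f (Φ ^ k)| ≤ C k := by
  refine abs_wInner_le_of_mem_convexHull (fun ψ hψ => ?_) (pow_mem_convexHull_pow hΦ k)
  obtain ⟨F, rfl⟩ := Set.mem_pow.1 hψ
  choose g hg hgF using fun j => (F j).2
  have hprod : (List.ofFn fun j => (F j : (ι → ZMod N) → ℝ)).prod =
      fun x => ∏ j, dualFn ν (g j) x := by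
    funext x
    simp [List.prod_ofFn, Finset.prod_apply, hgF]
  exact hprod ▸ hC k g hg

lemma wInner_le_half_add_wInner_posPart (hν : ∀ I : Finset ι, I ≠ univ → ∀ z, 0 ≤ ν I z)
    {g νd : (ι → ZMod N) → ℝ} (hg : ∀ x, 0 ≤ g x ∧ g x ≤ νd x) (Φ : (ι → ZMod N) → ℝ) :
    wInner ν g Φ ≤ wInner ν (fun x => if 0 < Φ x then 2 else 0) Φ / 2 +
      wInner ν (fun x => νd x - 1) (fun x => max (Φ x) 0) := by
  simp only [wInner, expect_div, ← expect_add_distrib]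
  refine expect_le_expect fun x _ => ?_
  have hw := innerWeight_nonneg hν x
  simp only [innerWeight] at hw
  split_ifs with hΦ
  · rw [max_eq_left hΦ.le]
    nlinarith [mul_nonneg (mul_nonneg (sub_nonneg.2 (hg x).2) hΦ.le) hw]
  · rw [max_eq_right (not_lt.1 hΦ)]
    nlinarith [mul_nonneg (mul_nonneg (hg x).1 (neg_nonneg.2 (not_lt.1 hΦ))) hw]

lemma wInner_posPart_le (hν : ∀ I : Finset ι, I ≠ univ → ∀ z, 0 ≤ ν I z)
    {νd Φ : (ι → ZMod N) → ℝ} (hνd : ∀ x, 0 ≤ νd x) {T δ : ℝ} {Q : ℝ[X]}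
    (hQ : ∀ t ∈ Set.Icc (-T) T, |Q.eval t - max t 0| < δ) (hΦ : ∀ x, |Φ x| ≤ T) :
    wInner ν (fun x => νd x - 1) (fun x => max (Φ x) 0) ≤
      wInner ν (fun x => νd x - 1) (Polynomial.aeval Φ Q) +
        δ * (wInner ν νd (fun _ => 1) + wInner ν (fun _ => 1) (fun _ => 1)) := by
  simp only [wInner, mul_expect, ← expect_add_distrib, Polynomial.aeval_fn_apply,
    Polynomial.coe_aeval_eq_eval]
  refine expect_le_expect fun x _ => ?_
  have hw := innerWeight_nonneg hν x
  simp only [innerWeight] at hw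
  have hQx := abs_le.1 (hQ (Φ x) (abs_le.1 (hΦ x))).le
  -- `|(νd - 1)(Φ⁺ - Q Φ)| ≤ |νd - 1| δ ≤ (νd + 1) δ`
  have : (νd x - 1) * max (Φ x) 0 ≤ (νd x - 1) * Q.eval (Φ x) + δ * (νd x + 1) := by
    rcases le_total 1 (νd x) with h | h <;> nlinarith [hνd x]
  nlinarith

lemma boxNorm_le_of_forall_wInner_dualFn_le {Ω : Set (ι → ZMod N)} {νd : (ι → ZMod N) → ℝ}
    (hpos : ∀ f ∈ FT Ω, f ≠ 0 → 0 < wInner ν f (dualFn ν f)) {η : ℝ} (hη : 0 ≤ η)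
    {b : (ι → ZMod N) → ℝ} (hb : b ∈ STset Ω νd)
    (hbD : ∀ h ∈ STset Ω νd, wInner ν b (dualFn ν h) ≤ η ^ 2 ^ Fintype.card ι) :
    boxNorm ν b ≤ η := by
  have h0 : 0 ≤ wInner ν b (dualFn ν b) := by
    rcases eq_or_ne b 0 with rfl | hb0
    · simp [wInner]
    · exact (hpos b hb.1 hb0).le
  rw [wInner_dualFn_self] at h0
  exact boxNorm_le_of_gowersInner_le hη h0 (wInner_dualFn_self (ν := ν) b ▸ hbD b hb)

lemma wInner_le_of_mem_convexHull_dualFn (hν : ∀ I : Finset ι, I ≠ univ → ∀ z, 0 ≤ ν I z)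
    {νd : (ι → ZMod N) → ℝ} (hνd : ∀ x, 0 ≤ νd x) {Ω : Set (ι → ZMod N)}
    (hΩ : HasFaceStructure Ω) {T : ℝ} (hT : 0 ≤ T)
    (hDT : ∀ g ∈ STset Ω νd, ∀ x ∈ Ω, |dualFn ν g x| ≤ T) {Cm : ℕ → ℝ}
    (hDC : ∀ (m : ℕ) (g : Fin m → ((ι → ZMod N) → ℝ)), (∀ j, g j ∈ STset Ω νd) →
      ∀ f : (ι → ZMod N) → ℝ, boxNorm ν f ≤ 1 →
        |wInner ν (fun x => ∏ j, dualFn ν (g j) x) f| ≤ Cm m)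
    {Q : ℝ[X]} {δ : ℝ} (hQ : ∀ t ∈ Set.Icc (-T) T, |Q.eval t - max t 0| < δ)
    {ε : ℝ} (hε : 0 < ε) (hbox : boxNorm ν (fun x => νd x - 1) ≤ ε)
    (hmass : wInner ν νd (fun _ => 1) + wInner ν (fun _ => 1) (fun _ => 1) ≤ 3)
    {g : (ι → ZMod N) → ℝ} (hg : ∀ x, 0 ≤ g x ∧ g x ≤ νd x) {Φ : (ι → ZMod N) → ℝ}
    (hΦ : Φ ∈ convexHull ℝ (dualFn ν '' STset Ω νd)) :
    ∃ a ∈ boundedFT Ω, wInner ν g Φ ≤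
      wInner ν a Φ / 2 + (∑ k ∈ range (Q.natDegree + 1), |Q.coeff k| * Cm k) * ε + 3 * δ := by
  obtain ⟨hΦΩ, hΦT⟩ := mem_FT_of_mem_convexHull_dualFn hΩ hT hDT hΦ
  have hδ : 0 ≤ δ := (abs_nonneg _).trans (hQ 0 ⟨by linarith, hT⟩).le
  have hpoly := abs_map_aeval_le (wInnerₗ ν fun x => νd x - 1) Q Φ
    (abs_wInner_pow_le_of_mem_convexHull_dualFn
      (fun m g hg => abs_wInner_le_mul_of_boxNorm_le hε hbox (hDC m g hg)) hΦ)
  simp only [wInnerₗ_apply, ← mul_assoc, ← sum_mul] at hpoly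
  refine ⟨fun x => if 0 < Φ x then 2 else 0,
    ⟨fun x hx => by simp [hΦΩ x hx], fun x _ => by dsimp only; split_ifs <;> norm_num⟩, ?_⟩
  linarith [wInner_le_half_add_wInner_posPart hν hg Φ, wInner_posPart_le hν hνd hQ hΦT,
    (abs_le.1 hpoly).2, mul_le_mul_of_nonneg_left hmass hδ]

lemma exists_decomposition_of_indicator_mem_add
    (hν : ∀ I : Finset ι, I ≠ univ → ∀ z, 0 ≤ ν I z) {Ω : Set (ι → ZMod N)}
    {νd f : (ι → ZMod N) → ℝ} (hνd : ∀ x, 0 ≤ νd x) (hf : ∀ x, 0 ≤ f x ∧ f x ≤ νd x)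
    (hg : ∀ x, 0 ≤ Ω.indicator f x ∧ Ω.indicator f x ≤ νd x)
    (hpos : ∀ f ∈ FT Ω, f ≠ 0 → 0 < wInner ν f (dualFn ν f)) {η κ : ℝ} (hη : 0 ≤ η)
    (hout : wInner ν (Ωᶜ.indicator νd) (fun _ => 1) ≤ κ)
    (hdecomp : Ω.indicator f ∈ boundedFT Ω +
      {b | ∀ φ ∈ dualFn ν '' STset Ω νd, wInner ν b φ ≤ η ^ 2 ^ Fintype.card ι}) :
    ∃ f₁ f₂ f₃ : (ι → ZMod N) → ℝ,
      f = f₁ + f₂ + f₃ ∧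
      (∀ x, 0 ≤ f₁ x ∧ f₁ x ≤ 2) ∧ (∀ x, x ∉ Ω → f₁ x = 0) ∧
      boxNorm ν f₂ ≤ η ∧ (∀ x, x ∉ Ω → f₂ x = 0) ∧
      (∀ x, 0 ≤ f₃ x ∧ f₃ x ≤ νd x) ∧ (∀ x ∈ Ω, f₃ x = 0) ∧
      wInner ν f₃ (fun _ => 1) ≤ κ := by
  obtain ⟨a, ha, b, hb, hab⟩ := Set.mem_add.1 hdecomp
  have hbS : b ∈ STset Ω νd :=
    mem_STset_of_add_eq ha (fun x hx => Set.indicator_of_notMem hx f) hg hab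
  refine ⟨a, b, Ωᶜ.indicator f, by rw [hab, Set.indicator_self_add_compl],
    fun x => ha.2 x trivial, ha.1, ?_, hbS.1, fun x => ?_,
    fun x hx => Set.indicator_of_notMem (by simpa) _, ?_⟩
  · exact boxNorm_le_of_forall_wInner_dualFn_le hpos hη hbS fun h hh => hb _ ⟨h, hh, rfl⟩
  · by_cases hx : x ∈ Ω <;> simp [hx, hf x, hνd x]
  · refine (wInner_le_wInner hν fun x => ?_).trans hout
    by_cases hx : x ∈ Ω <;> simp [hx, hf x]

end

theorem transference_principle_general (d : ℕ) (hd : 1 ≤ d) (T η κ : ℝ) (hT : 1 < T)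
    (hη0 : 0 < η) (Cm : ℕ → ℝ) (hCm : ∀ m, 0 < Cm m) :
    ∃ ε : ℝ, 0 < ε ∧ ∀ (N : ℕ) [NeZero N], 1 ≤ N →
    ∀ ν : (I : Finset (Fin d)) → (I → ZMod N) → ℝ,
      (∀ I : Finset (Fin d), I ≠ univ → ∀ z, 0 ≤ ν I z) →
    ∀ νd : (Fin d → ZMod N) → ℝ, (∀ x, 0 ≤ νd x) →
    ∀ Ω : Set (Fin d → ZMod N), HasFaceStructure Ω →
    (∀ g ∈ STset Ω νd, ∀ x ∈ Ω, |dualFn ν g x| ≤ T) →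
    (∀ (m : ℕ) (g : Fin m → ((Fin d → ZMod N) → ℝ)), (∀ j, g j ∈ STset Ω νd) →
      ∀ f : (Fin d → ZMod N) → ℝ, boxNorm ν f ≤ 1 →
        |wInner ν (fun x => ∏ j, dualFn ν (g j) x) f| ≤ Cm m) →
    (∀ f ∈ FT Ω, f ≠ 0 → 0 < wInner ν f (dualFn ν f)) →
    boxNorm ν (fun x => νd x - 1) ≤ ε →
    wInner ν νd (fun _ => 1) ≤ 1 + ε →
    wInner ν (fun _ => 1) (fun _ => 1) ≤ 1 + ε →
    wInner ν (Ωᶜ.indicator νd) (fun _ => 1) ≤ κ →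
    ∀ f : (Fin d → ZMod N) → ℝ, (∀ x, 0 ≤ f x ∧ f x ≤ νd x) →
    ∃ f₁ f₂ f₃ : (Fin d → ZMod N) → ℝ,
      f = f₁ + f₂ + f₃ ∧
      (∀ x, 0 ≤ f₁ x ∧ f₁ x ≤ 2) ∧ (∀ x, x ∉ Ω → f₁ x = 0) ∧
      boxNorm ν f₂ ≤ η ∧ (∀ x, x ∉ Ω → f₂ x = 0) ∧
      (∀ x, 0 ≤ f₃ x ∧ f₃ x ≤ νd x) ∧ (∀ x ∈ Ω, f₃ x = 0) ∧
      wInner ν f₃ (fun _ => 1) ≤ κ := by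
  have : Nonempty (Fin d) := ⟨⟨0, hd⟩⟩
  set lam := η ^ 2 ^ d
  have hlam : 0 < lam := by positivity
  obtain ⟨Q, hQ⟩ := exists_polynomial_near_of_continuousOn (-T) T (fun t => max t 0)
    (by fun_prop) (lam / 24) (by positivity)
  set A := ∑ k ∈ range (Q.natDegree + 1), |Q.coeff k| * Cm k
  have hA : 0 ≤ A := sum_nonneg fun k _ => mul_nonneg (abs_nonneg _) (hCm k).le
  refine ⟨min (lam / (8 * (A + 1))) (1 / 2), by positivity, ?_⟩
  intro N _ _ ν hν νd hνd Ω hΩ hDT hDC hpos hbox hνd1 h11 hout f hf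
  have hAε : A * min (lam / (8 * (A + 1))) (1 / 2) ≤ lam / 8 := by
    refine (mul_le_mul_of_nonneg_left (min_le_left _ _) hA).trans ?_
    rw [mul_div_assoc', div_le_div_iff₀ (by positivity) (by norm_num)]
    nlinarith
  have hg (x : Fin d → ZMod N) : 0 ≤ Ω.indicator f x ∧ Ω.indicator f x ≤ νd x := by
    by_cases hx : x ∈ Ω <;> simp [hx, hf x, hνd x]
  refine exists_decomposition_of_indicator_mem_add hν hνd hf hg hpos hη0.le hout ?_
  rw [Fintype.card_fin]
  refine (mem_add_or_exists_mem_convexHull_wInner (convex_boundedFT Ω) (isCompact_boundedFT Ω)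
    ⟨fun _ _ => rfl, fun _ _ => ⟨le_rfl, zero_le_two⟩⟩
    ((isCompact_STset Ω νd).image continuous_dualFn)
    ⟨0, ⟨fun _ _ => rfl, fun x => by rw [Pi.zero_apply, abs_zero]; linarith [hνd x]⟩, dualFn_zero⟩ hlam _).resolve_right ?_
  rintro ⟨Φ, hΦ, hgΦ, hKΦ⟩
  -- `λ < ⟨f 1_Ω, Φ⟩ ≤ ⟨a, Φ⟩ / 2 + A ε + 3 λ / 24 < λ / 2 + λ / 8 + λ / 8`
  obtain ⟨a, ha, hle⟩ := wInner_le_of_mem_convexHull_dualFn hν hνd hΩ (by linarith) hDT hDC hQ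
    (by positivity) hbox (by linarith [min_le_right (lam / (8 * (A + 1))) (1 / 2)]) hg hΦ
  linarith [hKΦ a ha]

/-- Transference principle. -/
theorem transference_principle (d : ℕ) (hd : 1 ≤ d) (T η κ : ℝ) (hT : 1 < T)
    (hη0 : 0 < η) (hη1 : η < 1) (hκ : 0 < κ) (Cm : ℕ → ℝ) (hCm : ∀ m, 0 < Cm m) :
    ∃ ε : ℝ, 0 < ε ∧ ∀ (N : ℕ) [NeZero N], 1 ≤ N →
    ∀ ν : (I : Finset (Fin d)) → (I → ZMod N) → ℝ,
      (∀ I : Finset (Fin d), I ≠ univ → ∀ z, 0 ≤ ν I z) →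
    ∀ νd : (Fin d → ZMod N) → ℝ, (∀ x, 0 ≤ νd x) →
    ∀ Ω : Set (Fin d → ZMod N), HasFaceStructure Ω →
    (∀ g ∈ STset Ω νd, ∀ x ∈ Ω, |dualFn ν g x| ≤ T) →
    (∀ (m : ℕ) (g : Fin m → ((Fin d → ZMod N) → ℝ)), (∀ j, g j ∈ STset Ω νd) →
      ∀ f : (Fin d → ZMod N) → ℝ, boxNorm ν f ≤ 1 →
        |wInner ν (fun x => ∏ j, dualFn ν (g j) x) f| ≤ Cm m) →
    (∀ f ∈ FT Ω, f ≠ 0 → 0 < wInner ν f (dualFn ν f)) →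
    boxNorm ν (fun x => νd x - 1) ≤ ε →
    wInner ν νd (fun _ => 1) ≤ 1 + ε →
    wInner ν (fun _ => 1) (fun _ => 1) ≤ 1 + ε →
    wInner ν (Ωᶜ.indicator νd) (fun _ => 1) ≤ κ →
    ∀ f : (Fin d → ZMod N) → ℝ, (∀ x, 0 ≤ f x ∧ f x ≤ νd x) →
    ∃ f₁ f₂ f₃ : (Fin d → ZMod N) → ℝ,
      f = f₁ + f₂ + f₃ ∧
      (∀ x, 0 ≤ f₁ x ∧ f₁ x ≤ 2) ∧ (∀ x, x ∉ Ω → f₁ x = 0) ∧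
      boxNorm ν f₂ ≤ η ∧ (∀ x, x ∉ Ω → f₂ x = 0) ∧
      (∀ x, 0 ≤ f₃ x ∧ f₃ x ≤ νd x) ∧ (∀ x ∈ Ω, f₃ x = 0) ∧
      wInner ν f₃ (fun _ => 1) ≤ κ :=
  transference_principle_general d hd T η κ hT hη0 Cm hCm
end
end
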